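/- Let n ≥ 3 and d with 2 ≤ d ≤ n-1, and 1 ≤ k ≤ d-1. The map sending (a_1,...,a_n,d) to (k, a_1,...,a_n, d-k) is a bijection from the set of λ-quiddities of size n+1 with last component d onto the set of positive-integer solutions (b_1,...,b_{n+2}) of M_{n+2}(b_1,...,b_{n+2}) = ±S with b_1 = k and b_{n+2} = d-k, where S = [[0,-1],[1,0]]. -/
import Mathlib

open Matrix

def E (a : ℤ) : Matrix (Fin 2) (Fin 2) ℤ := !![a, -1; 1, 0]

/-- `M [a₁, …, aₙ] = E aₙ * ⋯ * E a₁`. -/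
def M (l : List ℤ) : Matrix (Fin 2) (Fin 2) ℤ :=
  (l.map E).foldl (fun acc x => x * acc) 1

def S : Matrix (Fin 2) (Fin 2) ℤ := !![0, -1; 1, 0]

def T : Matrix (Fin 2) (Fin 2) ℤ := !![1, 1; 0, 1]

lemma foldl_mul (L : List (Matrix (Fin 2) (Fin 2) ℤ)) (b : Matrix (Fin 2) (Fin 2) ℤ) :
    L.foldl (fun acc x => x * acc) b = L.foldl (fun acc x => x * acc) 1 * b := by
  induction L generalizing b with
  | nil => simp
  | cons a L ih => simp only [List.foldl_cons]; rw [ih (a*b), ih (a*1)]; simp [mul_assoc]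

lemma M_append (l₁ l₂ : List ℤ) : M (l₁ ++ l₂) = M l₂ * M l₁ := by
  simp only [M, List.map_append, List.foldl_append]
  rw [foldl_mul]

lemma M_cons (a : ℤ) (l : List ℤ) : M (a :: l) = M l * E a := by
  simp only [M, List.map_cons, List.foldl_cons]
  rw [foldl_mul]; simp

lemma M_singleton (a : ℤ) : M [a] = E a := by simp [M]

theorem key1 (a b cc dd c k : ℤ) :
    E (c - k) * !![a, b; cc, dd] * E k = S ↔ E c * !![a, b; cc, dd] = 1 := by
  simp only [E, S, Matrix.mul_fin_two, ← Matrix.ext_iff, Fin.forall_fin_two]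
  simp only [Matrix.cons_val', Matrix.cons_val_zero, Matrix.cons_val_one, Matrix.head_cons,
    Matrix.head_fin_const, Matrix.one_apply, Matrix.empty_val', Matrix.cons_val_fin_one]
  norm_num
  constructor
  · rintro ⟨⟨h1a, h1b⟩, h2a, h2b⟩
    exact ⟨⟨by linear_combination -h1b + k*h2b,
      by linear_combination h1a + k*h1b + k*h2a - k^2*h2b⟩, h2b,
      by linear_combination h2a - k*h2b⟩
  · rintro ⟨⟨h1a, h1b⟩, h2a, h2b⟩
    exact ⟨⟨by linear_combination k*h1a + h1b - k^2*h2a - k*h2b,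
      by linear_combination -h1a + k*h2a⟩,
      by linear_combination k*h2a + h2b, h2a⟩

theorem key2 (a b cc dd c k : ℤ) :
    E (c - k) * !![a, b; cc, dd] * E k = -S ↔ E c * !![a, b; cc, dd] = -1 := by
  simp only [E, S, Matrix.mul_fin_two, ← Matrix.ext_iff, Fin.forall_fin_two]
  simp only [Matrix.cons_val', Matrix.cons_val_zero, Matrix.cons_val_one, Matrix.head_cons,
    Matrix.head_fin_const, Matrix.one_apply, Matrix.empty_val', Matrix.cons_val_fin_one,
    Matrix.neg_apply]
  norm_num
  constructor
  · rintro ⟨⟨h1a, h1b⟩, h2a, h2b⟩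
    exact ⟨⟨by linear_combination -h1b + k*h2b,
      by linear_combination h1a + k*h1b + k*h2a - k^2*h2b⟩, h2b,
      by linear_combination h2a - k*h2b⟩
  · rintro ⟨⟨h1a, h1b⟩, h2a, h2b⟩
    exact ⟨⟨by linear_combination k*h1a + h1b - k^2*h2a - k*h2b,
      by linear_combination -h1a + k*h2a⟩,
      by linear_combination k*h2a + h2b, h2a⟩

theorem key (A : Matrix (Fin 2) (Fin 2) ℤ) (c k : ℤ) :
    (E (c - k) * A * E k = S ∨ E (c - k) * A * E k = -S) ↔
      (E c * A = 1 ∨ E c * A = -1) := by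
  rw [Matrix.eta_fin_two A]
  exact or_congr (key1 _ _ _ _ _ _) (key2 _ _ _ _ _ _)

theorem stmt19 (n d k : ℕ) (hn : 3 ≤ n) (hd₁ : 2 ≤ d) (hd₂ : d ≤ n - 1)
    (hk₁ : 1 ≤ k) (hk₂ : k ≤ d - 1) :
    Set.BijOn (fun l : List ℤ => (k : ℤ) :: (l.dropLast ++ [(d : ℤ) - (k : ℤ)]))
      {l : List ℤ | l.length = n + 1 ∧ (∀ a ∈ l, 0 < a) ∧
          (M l = 1 ∨ M l = -1) ∧ l.getLast? = some (d : ℤ)}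
      {l : List ℤ | l.length = n + 2 ∧ (∀ a ∈ l, 0 < a) ∧
          (M l = S ∨ M l = -S) ∧ l.head? = some (k : ℤ) ∧
          l.getLast? = some ((d : ℤ) - (k : ℤ))} := by
  have hkd : k + 1 ≤ d := by omega
  have hdk : (1:ℤ) ≤ (d:ℤ) - (k:ℤ) := by
    have : ((k:ℤ) + 1) ≤ (d:ℤ) := by exact_mod_cast hkd
    linarith
  refine ⟨?_, ?_, ?_⟩
  · rintro l ⟨hlen, hpos, hM, hlast⟩
    have hl : l.dropLast ++ [(d:ℤ)] = l :=
      List.dropLast_append_getLast? _ hlast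
    refine ⟨?_, ?_, ?_, rfl, ?_⟩
    · have : l.dropLast.length = n := by simp [List.length_dropLast, hlen]
      simp [this]
    · intro a ha
      simp only [List.mem_cons, List.mem_append, List.not_mem_nil, or_false] at ha
      rcases ha with rfl | ha | rfl
      · exact_mod_cast hk₁
      · exact hpos a (List.dropLast_subset l ha)
      · linarith
    · have hMl : M l = E (d:ℤ) * M l.dropLast := by
        conv_lhs => rw [← hl]
        rw [M_append, M_singleton]
      have hM2 : M ((k:ℤ) :: (l.dropLast ++ [(d:ℤ) - (k:ℤ)]))
          = E ((d:ℤ) - (k:ℤ)) * M l.dropLast * E (k:ℤ) := by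
        rw [M_cons, M_append, M_singleton, mul_assoc]
      rw [hM2]
      rw [hMl] at hM
      exact (key (M l.dropLast) (d:ℤ) (k:ℤ)).mpr hM
    · simp only
      rw [show ((k:ℤ) :: (l.dropLast ++ [(d:ℤ) - (k:ℤ)])) = ((k:ℤ) :: l.dropLast) ++ [(d:ℤ) - (k:ℤ)] from rfl, List.getLast?_concat]
  · rintro l1 ⟨h1len, _, _, h1last⟩ l2 ⟨h2len, _, _, h2last⟩ heq
    simp only [List.cons.injEq, List.append_cancel_right_eq, true_and] at heq
    have hl1 : l1.dropLast ++ [(d:ℤ)] = l1 := List.dropLast_append_getLast? _ h1last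
    have hl2 : l2.dropLast ++ [(d:ℤ)] = l2 := List.dropLast_append_getLast? _ h2last
    rw [← hl1, ← hl2, heq]
  · rintro l' ⟨hlen, hpos, hM, hhead, hlast⟩
    have hl' : (k:ℤ) :: l'.tail = l' := List.cons_head?_tail hhead
    have htlen : l'.tail.length = n + 1 := by
      simp [List.length_tail, hlen]
    have htlast : l'.tail.getLast? = some ((d:ℤ) - (k:ℤ)) := by
      rw [← hl'] at hlast
      obtain ⟨t, ht⟩ : ∃ t, l'.tail = t := ⟨_, rfl⟩
      rw [ht] at hlast htlen ⊢
      cases t with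
      | nil => simp at htlen
      | cons b t' => rwa [List.getLast?_cons_cons] at hlast
    set m := l'.tail.dropLast with hmdef
    have hm : m ++ [(d:ℤ) - (k:ℤ)] = l'.tail :=
      List.dropLast_append_getLast? _ htlast
    have hmlen : m.length = n := by simp [hmdef, List.length_dropLast, htlen]
    refine ⟨m ++ [(d:ℤ)], ⟨?_, ?_, ?_, ?_⟩, ?_⟩
    · simp [hmlen]
    · intro a ha
      simp only [List.mem_append, List.mem_singleton] at ha
      rcases ha with ha | rfl
      · exact hpos a (List.tail_subset l' (List.dropLast_subset _ ha))
      · exact_mod_cast Nat.lt_of_lt_of_le Nat.zero_lt_two hd₁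
    · have hMl' : M l' = E ((d:ℤ) - (k:ℤ)) * M m * E (k:ℤ) := by
        conv_lhs => rw [← hl', ← hm]
        rw [M_cons, M_append, M_singleton, mul_assoc]
      have : M (m ++ [(d:ℤ)]) = E (d:ℤ) * M m := by
        rw [M_append, M_singleton]
      rw [this]
      rw [hMl'] at hM
      exact (key (M m) (d:ℤ) (k:ℤ)).mp hM
    · simp
    · simp only
      rw [List.dropLast_concat, hm, hl']
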